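/- arXiv:2106.03659 — 3 statements merged into one kernel-verified Lean document; each statement's English description precedes it below -/
import Mathlib

section
/- For all k ≥ 1 and n ≥ 1, a_k(n) = a_{k-1}(n+2) - C(n+k, k-1), equivalently, the partial sum ∑_{m=1}^n a_{k-1}(m) = a_{k-1}(n+2) - C(n+k, k-1). -/
def fib (n : ℕ) : ℕ := Nat.fib n

def a : ℕ → ℕ → ℕ
  | 0, n => fib n
  | k + 1, n => ∑ m ∈ Finset.Icc 1 n, a k m

def s (k n : ℕ) : ℕ :=
  ((Finset.Icc 1 n).powerset.filter (fun S => k ≤ S.card ∧ ∀ x ∈ S, S.card ≤ x)).card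

/-!
Writing `a (k + 1) (n + 1) = a (k + 1) n + a k (n + 1)`, the identity
`a (k + 1) n + C(n + k + 1, k) = a k (n + 2)` follows by a double induction: for `k = 0` it is
`∑ F_m = F_{n+2} - 1`, and in general the two recurrences for `a` and Pascal's rule for the
binomial coefficient combine the instances at `(k + 1, n)` and `(k, n + 1)` into the one at
`(k + 1, n + 1)`.
-/

theorem a_succ_succ (k n : ℕ) : a (k + 1) (n + 1) = a (k + 1) n + a k (n + 1) :=
  Finset.sum_Icc_succ_top (by omega) _

theorem a_zero_right : ∀ k, a k 0 = 0
  | 0 => rfl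
  | _ + 1 => rfl

theorem a_one : ∀ k, a k 1 = 1
  | 0 => rfl
  | k + 1 => by rw [a_succ_succ, a_zero_right, a_one k]

theorem a_two : ∀ k, a k 2 = k + 1
  | 0 => rfl
  | k + 1 => by rw [a_succ_succ, a_one, a_two k, add_comm]

theorem a_succ_add_choose : ∀ k n, a (k + 1) n + (n + k + 1).choose k = a k (n + 2)
  | k, 0 => by rw [a_zero_right, a_two, zero_add, zero_add, Nat.choose_succ_self_right]
  | 0, n + 1 => by
    have ih := a_succ_add_choose 0 n
    have fib_rec : a 0 (n + 1 + 2) = a 0 (n + 1) + a 0 (n + 2) := Nat.fib_add_two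
    rw [Nat.choose_zero_right] at ih ⊢
    rw [a_succ_succ]
    omega
  | k + 1, n + 1 => by
    have ih_n := a_succ_add_choose (k + 1) n
    have ih_k := a_succ_add_choose k (n + 1)
    have pascal : (n + 1 + (k + 1) + 1).choose (k + 1)
        = (n + 1 + k + 1).choose k + (n + (k + 1) + 1).choose (k + 1) := by
      rw [show n + 1 + (k + 1) + 1 = n + k + 2 + 1 by omega, Nat.choose_succ_succ,
        show n + 1 + k + 1 = n + k + 2 by omega, show n + (k + 1) + 1 = n + k + 2 by omega]
    have step : a (k + 1) (n + 1 + 2) = a (k + 1) (n + 2) + a k (n + 1 + 2) :=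
      a_succ_succ k (n + 2)
    rw [a_succ_succ, pascal]
    omega

theorem partial_sum_identity_general (k n : ℕ) (hk : 1 ≤ k) :
    a k n + Nat.choose (n + k) (k - 1) = a (k - 1) (n + 2) ∧
    (∑ m ∈ Finset.Icc 1 n, a (k - 1) m) + Nat.choose (n + k) (k - 1) = a (k - 1) (n + 2) := by
  obtain ⟨j, rfl⟩ : ∃ j, k = j + 1 := ⟨k - 1, by omega⟩
  have h := a_succ_add_choose j n
  rw [Nat.add_sub_cancel, ← add_assoc]
  exact ⟨h, h⟩

theorem partial_sum_identity (k n : ℕ) (hk : 1 ≤ k) (hn : 1 ≤ n) :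
    a k n + Nat.choose (n + k) (k - 1) = a (k - 1) (n + 2) ∧
    (∑ m ∈ Finset.Icc 1 n, a (k - 1) m) + Nat.choose (n + k) (k - 1) = a (k - 1) (n + 2) :=
  partial_sum_identity_general k n hk
end

section
/- Fix ℓ ≥ 0 and n ≥ 1. Then s_{ℓ+1}(n) = s_ℓ(n) - C(n - ℓ + 1, ℓ). -/
/-!
Schreier sets of size at least `l` split into those of size at least `l + 1` and those of size
exactly `l`. A set of size `l` is Schreier iff all its elements are `≥ l`, so these are the
`l`-subsets of `{max 1 l, …, n}`, of which there are `C(n - l + 1, l)`.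
-/

open Finset

theorem card_filter_le_card_eq_add {α : Type*} (t : Finset (Finset α)) (k : ℕ)
    (p : Finset α → Prop) [DecidablePred p] :
    #(t.filter fun S => k ≤ #S ∧ p S) =
      #(t.filter fun S => k + 1 ≤ #S ∧ p S) + #(t.filter fun S => #S = k ∧ p S) := by
  rw [← card_filter_add_card_filter_not (fun S => k + 1 ≤ #S), filter_filter, filter_filter]
  congr 2 <;> ext S <;> simp only [mem_filter] <;> grind

theorem powerset_filter_card_eq_and_forall_mem {α : Type*} (u : Finset α) (k : ℕ)
    (q : α → Prop) [DecidablePred q] :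
    u.powerset.filter (fun S => #S = k ∧ ∀ x ∈ S, q x) = powersetCard k (u.filter q) := by
  ext S
  simp only [mem_filter, mem_powerset, mem_powersetCard, subset_iff]
  grind

theorem filter_le_Icc_one (l n : ℕ) : (Icc 1 n).filter (l ≤ ·) = Icc (max 1 l) n := by
  ext x
  simp only [mem_filter, mem_Icc]
  omega

theorem choose_succ_sub_max_one (l n : ℕ) (hn : 1 ≤ n) :
    (n + 1 - max 1 l).choose l = (n - l + 1).choose l := by
  rcases Nat.eq_zero_or_pos l with rfl | hl
  · simp
  rcases le_or_gt l n with h | h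
  · congr 1; omega
  · rw [Nat.choose_eq_zero_of_lt (by omega), Nat.choose_eq_zero_of_lt (by omega)]

theorem card_schreier_sets_of_card_eq (l n : ℕ) (hn : 1 ≤ n) :
    #((Icc 1 n).powerset.filter fun S => #S = l ∧ ∀ x ∈ S, #S ≤ x) = (n - l + 1).choose l := by
  have hcard : ((Icc 1 n).powerset.filter fun S => #S = l ∧ ∀ x ∈ S, #S ≤ x) =
      (Icc 1 n).powerset.filter fun S => #S = l ∧ ∀ x ∈ S, l ≤ x :=
    filter_congr fun S _ => and_congr_right fun h => by rw [h]
  rw [hcard, powerset_filter_card_eq_and_forall_mem, card_powersetCard, filter_le_Icc_one,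
    Nat.card_Icc, choose_succ_sub_max_one l n hn]

theorem s_succ (l n : ℕ) (hn : 1 ≤ n) :
    s (l + 1) n + Nat.choose (n - l + 1) l = s l n := by
  rw [s, s, card_filter_le_card_eq_add _ l, card_schreier_sets_of_card_eq l n hn]
end

section
/- For all n ≥ 1, the number of subsets S of {1, 2, ..., n} satisfying min S ≥ |S| (including the empty set) equals F_{n+2}, i.e., s_0(n) = F_{n+2}. -/
/-!
A Schreier set `S ⊆ {1, …, n}` with `|S| = k` is exactly a `k`-subset of `{k, …, n}`, so there are
`C(n + 1 - k, k)` of them. Summing over `k` gives the diagonal sum of Pascal's triangle, which is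
`F_{n+2}`.
-/

open Finset

theorem Nat.fib_succ_eq_sum_range_choose (n : ℕ) :
    Nat.fib (n + 1) = ∑ k ∈ range (n + 1), (n - k).choose k := by
  rw [Nat.fib_succ_eq_sum_choose, ← Nat.sum_antidiagonal_swap]
  exact Nat.sum_antidiagonal_eq_sum_range_succ (fun i j => j.choose i) n

theorem Finset.subset_Icc_card_iff {S : Finset ℕ} {n : ℕ} :
    S ⊆ Icc #S n ↔ S ⊆ Icc 1 n ∧ ∀ x ∈ S, #S ≤ x := by
  constructor
  · intro h
    refine ⟨fun x hx => ?_, fun x hx => (mem_Icc.mp (h hx)).1⟩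
    have hpos : 0 < #S := card_pos.mpr ⟨x, hx⟩
    have hx' := mem_Icc.mp (h hx)
    exact mem_Icc.mpr ⟨by omega, hx'.2⟩
  · rintro ⟨hsub, hmin⟩ x hx
    exact mem_Icc.mpr ⟨hmin x hx, (mem_Icc.mp (hsub hx)).2⟩

def schreierSets (n : ℕ) : Finset (Finset ℕ) :=
  {S ∈ (Icc 1 n).powerset | ∀ x ∈ S, #S ≤ x}

theorem filter_card_schreierSets (n k : ℕ) :
    {S ∈ schreierSets n | #S = k} = powersetCard k (Icc k n) := by
  ext S
  simp only [schreierSets, mem_filter, mem_powerset, mem_powersetCard]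
  constructor
  · rintro ⟨hS, rfl⟩
    exact ⟨subset_Icc_card_iff.mpr hS, rfl⟩
  · rintro ⟨hS, rfl⟩
    exact ⟨subset_Icc_card_iff.mp hS, rfl⟩

theorem card_schreierSets (n : ℕ) : #(schreierSets n) = Nat.fib (n + 2) := by
  have hcard : ∀ S ∈ schreierSets n, #S ∈ range (n + 2) := fun S hS => by
    have hle := card_le_card (mem_powerset.mp (mem_filter.mp hS).1)
    rw [Nat.card_Icc] at hle
    exact mem_range.mpr (by omega)
  rw [card_eq_sum_card_fiberwise hcard, Nat.fib_succ_eq_sum_range_choose]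
  refine sum_congr rfl fun k _ => ?_
  rw [filter_card_schreierSets, card_powersetCard, Nat.card_Icc]

theorem schreier_fib_general (n : ℕ) : s 0 n = fib (n + 2) := by
  simp only [s, zero_le, true_and, fib]
  exact card_schreierSets n

theorem schreier_fib (n : ℕ) (hn : 1 ≤ n) : s 0 n = fib (n + 2) :=
  schreier_fib_general n
end
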